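/- Let $G$ be a finite directed graph whose vertex set $V$ contains a distinguished subset $S$ of 'terminal' vertices (size at most $2N$), such that $G$ contains no cycles, every non-terminal vertex lies on a directed path between terminals, and distinct terminal pairs are joined by at most one path. If every path joining a pair of terminals can be crossed by at most $2N$ other such paths and there are at most $N^2$ terminal-to-terminal paths in total, then $\sum_{v \in V} (\deg(v) - 2) \leq 2N^3$, and hence $|E(G)| \leq n + 2N^3$ where $n = |V| - 2N$. -/

import Mathlib

open Finset

/-- A list of vertices is a directed path in the digraph with edge set `Edges`. -/
def IsDiChain {V : Type*} (Edges : Finset (V × V)) (l : List V) : Prop :=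
  l.Chain' (fun a b => (a, b) ∈ Edges)

/-- A terminal path: a directed path of length at least two whose endpoints are
terminals (in `S`) and whose interior vertices are non-terminal. -/
def IsTermPath {V : Type*} (Edges : Finset (V × V)) (S : Finset V)
    (l : List V) : Prop :=
  2 ≤ l.length ∧ IsDiChain Edges l ∧
    (∀ v, l.head? = some v → v ∈ S) ∧
    (∀ v, l.getLast? = some v → v ∈ S) ∧
    (∀ v ∈ (l.drop 1).dropLast, v ∉ S)

/-- The (total) degree of a vertex in the digraph. -/
def diDeg {V : Type*} [DecidableEq V] (Edges : Finset (V × V)) (v : V) : ℕ :=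
  (Edges.filter fun p => p.1 = v ∨ p.2 = v).card

set_option linter.unusedSectionVars false
namespace L5

variable {V : Type*} [DecidableEq V] {Edges : Finset (V × V)} {S : Finset V}

lemma chain_edge {l : List V} (hc : IsDiChain Edges l) {t : ℕ} (h : t + 1 < l.length) :
    (l[t]'(by omega), l[t+1]'h) ∈ Edges := by
  rw [IsDiChain, List.Chain', List.isChain_iff_getElem] at hc
  simpa using hc t (by omega)

/-- segment of a list from index t to s (inclusive) -/
def seg (l : List V) (t s : ℕ) : List V := (l.drop t).take (s - t + 1)

lemma seg_length {l : List V} {t s : ℕ} (hts : t ≤ s) (hs : s < l.length) :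
    (seg l t s).length = s - t + 1 := by
  simp [seg]; omega

lemma seg_getElem {l : List V} {t s m : ℕ} (hts : t ≤ s) (hs : s < l.length)
    (hm : m < (seg l t s).length) :
    (seg l t s)[m] = l[t + m]'(by rw [seg_length hts hs] at hm; omega) := by
  simp [seg, List.getElem_take, List.getElem_drop]

lemma seg_head? {l : List V} {t s : ℕ} (hts : t ≤ s) (hs : s < l.length) :
    (seg l t s).head? = some (l[t]'(by omega)) := by
  rw [List.head?_eq_getElem?, List.getElem?_eq_getElem (by have := seg_length hts hs; omega),
    seg_getElem hts hs]
  simp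

lemma seg_getLast? {l : List V} {t s : ℕ} (hts : t ≤ s) (hs : s < l.length) :
    (seg l t s).getLast? = some (l[s]'hs) := by
  have hlen := seg_length hts hs
  rw [List.getLast?_eq_getElem?, List.getElem?_eq_getElem (by omega)]
  have h2 := seg_getElem (l := l) (m := (seg l t s).length - 1) hts hs (by omega)
  rw [h2]
  congr 1
  simp only [show t + ((seg l t s).length - 1) = s from by omega]

lemma seg_chain {l : List V} (hc : IsDiChain Edges l) (t s : ℕ) :
    IsDiChain Edges (seg l t s) := (hc.drop t).take _

lemma nodup_of_chain (hacyclic : ∀ l : List V, 2 ≤ l.length → IsDiChain Edges l →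
      l.head? ≠ l.getLast?) {l : List V} (hc : IsDiChain Edges l) : l.Nodup := by
  rw [List.nodup_iff_injective_get]
  rintro ⟨t, ht⟩ ⟨s, hs⟩ h
  simp only [List.get_eq_getElem] at h
  by_contra hne
  have hne' : t ≠ s := by simpa using hne
  -- wlog t < s
  rcases Nat.lt_or_ge t s with hlt | hge
  · exact hacyclic (seg l t s) (by rw [seg_length hlt.le hs]; omega)
      (seg_chain hc t s)
      (by rw [seg_head? hlt.le hs, seg_getLast? hlt.le hs, h])
  · have hlt : s < t := by omega
    exact hacyclic (seg l s t) (by rw [seg_length hlt.le ht]; omega)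
      (seg_chain hc s t)
      (by rw [seg_head? hlt.le ht, seg_getLast? hlt.le ht, h])

section TP
variable {l : List V} (hl : IsTermPath Edges S l)
include hl

lemma tp_len : 2 ≤ l.length := hl.1
lemma tp_chain : IsDiChain Edges l := hl.2.1

lemma tp_ne_nil : l ≠ [] := by
  intro hh; have := hl.1; simp [hh] at this

lemma tp_head (h : 0 < l.length) : l[0] ∈ S := by
  have h3 := hl.2.2.1 _ (List.head?_eq_head (tp_ne_nil hl))
  rwa [List.head_eq_getElem] at h3

lemma tp_last (h : l.length - 1 < l.length) : l[l.length - 1] ∈ S := by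
  have h3 := hl.2.2.2.1 _ (List.getLast?_eq_getLast (tp_ne_nil hl))
  rwa [List.getLast_eq_getElem] at h3

lemma tp_interior {t : ℕ} (h1 : 1 ≤ t) (h2 : t + 1 < l.length) :
    l[t]'(by omega) ∉ S := by
  refine hl.2.2.2.2 _ ?_
  have hlen : (l.drop 1).dropLast.length = l.length - 2 := by simp; omega
  have : ((l.drop 1).dropLast)[t-1]'(by omega) = l[t]'(by omega) := by
    rw [List.getElem_dropLast, List.getElem_drop]
    congr 1; omega
  rw [← this]
  exact List.getElem_mem _

lemma tp_S_index {t : ℕ} (ht : t < l.length) (hS : l[t] ∈ S) :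
    t = 0 ∨ t = l.length - 1 := by
  by_contra h
  push_neg at h
  exact tp_interior hl (by omega) (by omega) hS

end TP

lemma mem_zip_of_consec {l : List V} {t : ℕ} (h : t + 1 < l.length) :
    (l[t]'(by omega), l[t+1]'h) ∈ l.zip l.tail := by
  rw [List.mem_iff_getElem]
  refine ⟨t, by simp [List.length_zip]; omega, ?_⟩
  rw [List.getElem_zip, List.getElem_tail]

lemma zip_nodup {l : List V} (hl : l.Nodup) : (l.zip l.tail).Nodup := by
  have h := List.map_snd_zip (l₁ := l) (l₂ := l.tail) (by simp)
  have h2 : (List.map Prod.snd (l.zip l.tail)).Nodup := by rw [h]; exact hl.tail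
  exact List.Nodup.of_map Prod.snd h2


lemma order_lemma (hacyclic : ∀ l : List V, 2 ≤ l.length → IsDiChain Edges l →
      l.head? ≠ l.getLast?) {l p : List V} (hcl : IsDiChain Edges l)
    (hcp : IsDiChain Edges p) (hnl : l.Nodup)
    {t s i i' : ℕ} (hts : t < s) (hs : s < l.length) (hi : i < p.length) (hi' : i' < p.length)
    (h1 : l[t]'(by omega) = p[i]) (h2 : l[s]'hs = p[i']) : i < i' := by
  have hne : i ≠ i' := by
    intro h
    subst h
    have hts' : l[t]'(by omega) = l[s]'hs := by rw [h1, h2]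
    have := List.nodup_iff_injective_get.1 hnl (a₁ := ⟨t, by omega⟩) (a₂ := ⟨s, hs⟩)
      (by simpa using hts')
    simp at this
    omega
  rcases Nat.lt_or_ge i i' with h | h
  · exact h
  have hlt : i' < i := by omega
  set c := seg l t s with hc
  set d := seg p (i' + 1) i with hd
  have hq : IsDiChain Edges (c ++ d) := by
    rw [IsDiChain, List.Chain', List.isChain_append]
    refine ⟨seg_chain hcl t s, seg_chain hcp _ _, ?_⟩
    intro x hx y hy
    rw [hc, seg_getLast? hts.le hs] at hx
    rw [hd, seg_head? (by omega) hi] at hy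
    simp only [Option.mem_some_iff] at hx hy
    subst hx; subst hy
    have he := chain_edge hcp (t := i') (by omega)
    rw [h2]
    exact he
  have hl1 := seg_length hts.le hs
  have hl2 := seg_length (l := p) (t := i'+1) (s := i) (by omega) hi
  have hlen2 : 2 ≤ (c ++ d).length := by
    rw [List.length_append, ← hc, ← hd] at *
    omega
  have hh : (c ++ d).head? = some (l[t]'(by omega)) := by
    rw [List.head?_append, hc, seg_head? hts.le hs]
    rfl
  have hg : (c ++ d).getLast? = some (l[t]'(by omega)) := by
    rw [List.getLast?_append, hd, seg_getLast? (by omega) hi, ← h1]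
    rfl
  exact absurd (hh.trans hg.symm) (hacyclic (c ++ d) hlen2 hq)

lemma splice {l p : List V} (hl : IsTermPath Edges S l) (hp : IsTermPath Edges S p)
    {i j : ℕ} (hi : i < p.length) (hj : j < l.length) (heq : p[i] = l[j])
    (hcase : (i + 1 < p.length ∧ j + 1 < l.length) ∨ (i = 0 ∧ j = 0) ∨
      (i = p.length - 1 ∧ j = l.length - 1)) :
    IsTermPath Edges S (p.take (i+1) ++ l.drop (j+1)) ∧
    (p.take (i+1) ++ l.drop (j+1)).head? = p.head? ∧
    (p.take (i+1) ++ l.drop (j+1)).getLast? = l.getLast? := by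
  have hLp := tp_len hp
  have hLl := tp_len hl
  rcases hcase with ⟨hi1, hj1⟩ | ⟨hi0, hj0⟩ | ⟨hiL, hjL⟩
  · -- main case
    have e1 : p.take (i+1) = seg p 0 i := by simp [seg]
    have e2 : l.drop (j+1) = seg l (j+1) (l.length - 1) := by
      rw [seg, List.take_of_length_le (by simp; omega)]
    have hs1 := seg_length (l := p) (t := 0) (s := i) (by omega) (by omega)
    have hs2 := seg_length (l := l) (t := j+1) (s := l.length - 1) (by omega) (by omega)
    have hql : (p.take (i+1) ++ l.drop (j+1)).length = (i + 1) + (l.length - j - 1) := by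
      rw [List.length_append, e1, e2, hs1, hs2]
      omega
    have hchain : IsDiChain Edges (p.take (i+1) ++ l.drop (j+1)) := by
      rw [IsDiChain, List.Chain', List.isChain_append]
      refine ⟨(tp_chain hp).take _, (tp_chain hl).drop _, ?_⟩
      intro x hx y hy
      rw [e1, seg_getLast? (by omega) (by omega)] at hx
      rw [e2, seg_head? (by omega) (by omega)] at hy
      simp only [Option.mem_some_iff] at hx hy
      subst hx; subst hy
      have he := chain_edge (tp_chain hl) (t := j) hj1
      rw [heq]
      exact he
    have hhead : (p.take (i+1) ++ l.drop (j+1)).head? = p.head? := by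
      rw [List.head?_append, e1, seg_head? (by omega) (by omega),
        List.head?_eq_head (tp_ne_nil hp), List.head_eq_getElem]
      rfl
    have hlast : (p.take (i+1) ++ l.drop (j+1)).getLast? = l.getLast? := by
      rw [List.getLast?_append, e2, seg_getLast? (by omega) (by omega),
        List.getLast?_eq_getLast (tp_ne_nil hl), List.getLast_eq_getElem]
      rfl
    refine ⟨⟨by omega, hchain, ?_, ?_, ?_⟩, hhead, hlast⟩
    · intro v hv
      rw [hhead] at hv
      exact hp.2.2.1 v hv
    · intro v hv
      rw [hlast] at hv
      exact hl.2.2.2.1 v hv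
    · intro v hv
      obtain ⟨m, hm, hv⟩ := List.mem_iff_getElem.1 hv
      rw [List.length_dropLast, List.length_drop, hql] at hm
      simp only [List.getElem_dropLast, List.getElem_drop] at hv
      have hlenT : (p.take (i+1)).length = i + 1 := by rw [List.length_take]; omega
      rcases Nat.lt_or_ge (1+m) (i+1) with hcc | hcc
      · have hb : (p.take (i+1) ++ l.drop (j+1))[1+m]'(by rw [hql]; omega)
            = p[1+m]'(by omega) := by
          rw [List.getElem_append_left (by rw [hlenT]; omega), List.getElem_take]
        have hni := tp_interior hp (t := 1+m) (by omega) (by omega)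
        rw [← hb, hv] at hni
        exact hni
      · have hb : (p.take (i+1) ++ l.drop (j+1))[1+m]'(by rw [hql]; omega)
            = l[(j+1) + (1 + m - (p.take (i+1)).length)]'(by rw [hlenT]; omega) := by
          rw [List.getElem_append_right (by rw [hlenT]; omega), List.getElem_drop]
        have hni := tp_interior hl (t := (j+1) + (1 + m - (p.take (i+1)).length))
          (by omega) (by rw [hlenT]; omega)
        rw [← hb, hv] at hni
        exact hni
  · -- i = 0, j = 0
    subst hi0; subst hj0
    have hq : p.take 1 ++ l.drop 1 = l := by
      have h1 : p.take 1 = [p[0]'(by omega)] := by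
        rw [List.take_one, List.head?_eq_head (tp_ne_nil hp), List.head_eq_getElem]
        rfl
      rw [h1, heq, List.singleton_append, ← List.drop_eq_getElem_cons (by omega)]
      simp
    rw [hq]
    refine ⟨hl, ?_, rfl⟩
    rw [List.head?_eq_head (tp_ne_nil hp), List.head?_eq_head (tp_ne_nil hl),
      List.head_eq_getElem, List.head_eq_getElem]
    rw [heq]
  · -- i = p.length - 1, j = l.length - 1
    have hq : p.take (i+1) ++ l.drop (j+1) = p := by
      rw [List.take_of_length_le (by omega), List.drop_of_length_le (by omega)]
      simp
    rw [hq]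
    refine ⟨hp, rfl, ?_⟩
    rw [List.getLast?_eq_getLast (tp_ne_nil hp), List.getLast?_eq_getLast (tp_ne_nil hl),
      List.getLast_eq_getElem, List.getLast_eq_getElem]
    subst hiL; subst hjL
    rw [heq]

lemma adjacency (hacyclic : ∀ l : List V, 2 ≤ l.length → IsDiChain Edges l →
      l.head? ≠ l.getLast?)
    (hunique : ∀ (s t : V) (l₁ l₂ : List V),
      IsTermPath Edges S l₁ → IsTermPath Edges S l₂ →
      l₁.head? = some s → l₁.getLast? = some t →
      l₂.head? = some s → l₂.getLast? = some t → l₁ = l₂)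
    {l p : List V} (hl : IsTermPath Edges S l)
    (hp : IsTermPath Edges S p) {j j' : ℕ} (hjj : j < j') (hj' : j' < l.length)
    (hu : l[j]'(by omega) ∈ p) (hw : l[j']'hj' ∈ p) :
    (l[j]'(by omega), l[j+1]'(by omega)) ∈ p.zip p.tail := by
  have hLp := tp_len hp
  have hLl := tp_len hl
  obtain ⟨i, hi, hpi⟩ := List.mem_iff_getElem.1 hu
  obtain ⟨i', hi', hpi'⟩ := List.mem_iff_getElem.1 hw
  have hii : i < i' :=
    order_lemma hacyclic (tp_chain hl) (tp_chain hp)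
      (nodup_of_chain hacyclic (tp_chain hl)) hjj hj' hi hi' hpi.symm hpi'.symm
  have hcase1 : (i + 1 < p.length ∧ j + 1 < l.length) ∨ (i = 0 ∧ j = 0) ∨
      (i = p.length - 1 ∧ j = l.length - 1) := by
    by_cases hS : l[j]'(by omega) ∈ S
    · have hj0 : j = 0 := by
        rcases tp_S_index hl (t := j) (by omega) hS with h | h
        · exact h
        · omega
      have hi0 : i = 0 := by
        have hS' : p[i] ∈ S := by rw [hpi]; exact hS
        rcases tp_S_index hp hi hS' with h | h
        · exact h
        · omega
      exact Or.inr (Or.inl ⟨hi0, hj0⟩)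
    · left
      constructor
      · have hne : i ≠ p.length - 1 := by
          intro h
          apply hS
          rw [← hpi]
          subst h
          exact tp_last hp (by omega)
        omega
      · have hne : j ≠ l.length - 1 := by
          intro h
          apply hS
          subst h
          exact tp_last hl (by omega)
        omega
  have hcase2 : (i' + 1 < p.length ∧ j' + 1 < l.length) ∨ (i' = 0 ∧ j' = 0) ∨
      (i' = p.length - 1 ∧ j' = l.length - 1) := by
    by_cases hS : l[j']'hj' ∈ S
    · have hjL : j' = l.length - 1 := by
        rcases tp_S_index hl (t := j') hj' hS with h | h
        · omega
        · exact h
      have hiL : i' = p.length - 1 := by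
        have hS' : p[i'] ∈ S := by rw [hpi']; exact hS
        rcases tp_S_index hp hi' hS' with h | h
        · omega
        · exact h
      exact Or.inr (Or.inr ⟨hiL, hjL⟩)
    · left
      constructor
      · have hne : i' ≠ p.length - 1 := by
          intro h
          apply hS
          rw [← hpi']
          subst h
          exact tp_last hp (by omega)
        omega
      · have hne : j' ≠ l.length - 1 := by
          intro h
          apply hS
          subst h
          exact tp_last hl (by omega)
        omega
  obtain ⟨ht1, hh1, hg1⟩ := splice hl hp hi (by omega) hpi hcase1
  obtain ⟨ht2, hh2, hg2⟩ := splice hl hp hi' hj' hpi' hcase2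
  have heq12 : p.take (i+1) ++ l.drop (j+1) = p.take (i'+1) ++ l.drop (j'+1) := by
    refine hunique (p.head (tp_ne_nil hp)) (l.getLast (tp_ne_nil hl)) _ _ ht1 ht2 ?_ ?_ ?_ ?_
    · rw [hh1, List.head?_eq_head]
    · rw [hg1, List.getLast?_eq_getLast]
    · rw [hh2, List.head?_eq_head]
    · rw [hg2, List.getLast?_eq_getLast]
  have hlenT : (p.take (i+1)).length = i + 1 := by rw [List.length_take]; omega
  have hlenT' : (p.take (i'+1)).length = i' + 1 := by rw [List.length_take]; omega
  have hlA : (p.take (i+1) ++ l.drop (j+1)).length = (i+1) + (l.length - (j+1)) := by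
    rw [List.length_append, hlenT, List.length_drop]
  have eA : (p.take (i+1) ++ l.drop (j+1))[i+1]'(by rw [hlA]; omega) = l[j+1]'(by omega) := by
    rw [List.getElem_append_right (by rw [hlenT]), List.getElem_drop]
    congr 1
    rw [hlenT]
    omega
  have eB : (p.take (i'+1) ++ l.drop (j'+1))[i+1]'(by rw [← heq12, hlA]; omega)
      = p[i+1]'(by omega) := by
    rw [List.getElem_append_left (by rw [hlenT']; omega), List.getElem_take]
  have key : l[j+1]'(by omega) = p[i+1]'(by omega) := by
    rw [← eA, ← eB]
    exact List.getElem_of_eq heq12 _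
  have hzm := mem_zip_of_consec (l := p) (t := i) (by omega)
  rw [hpi, ← key] at hzm
  exact hzm


lemma getLast?_cons_ne {w : V} {m : List V} (h : m ≠ []) :
    (w :: m).getLast? = m.getLast? := by
  cases m with
  | nil => simp at h
  | cons x t => rw [List.getLast?_cons_cons]

lemma interior_getElem {m : List V} {t : ℕ} (h1 : 1 ≤ t) (h2 : t + 1 < m.length) :
    m[t]'(by omega) ∈ (m.drop 1).dropLast := by
  have hlen : ((m.drop 1).dropLast).length = m.length - 2 := by simp; omega
  have : ((m.drop 1).dropLast)[t-1]'(by omega) = m[t]'(by omega) := by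
    rw [List.getElem_dropLast, List.getElem_drop]
    congr 1
    omega
  rw [← this]
  exact List.getElem_mem _

lemma no_self_loop (hacyclic : ∀ l : List V, 2 ≤ l.length → IsDiChain Edges l →
      l.head? ≠ l.getLast?) {a b : V} (h : (a, b) ∈ Edges) : a ≠ b := by
  intro hab
  subst hab
  exact hacyclic [a, a] (by simp) (by rw [IsDiChain, List.Chain', List.isChain_pair]; exact h) (by simp)

variable (Edges S) in
def TPaths : Prop := True

lemma nonterm_succ {v : V} {l : List V} (hl : IsTermPath Edges S l) (hv : v ∈ l)
    (hvS : v ∉ S) : ∃ w, (v, w) ∈ Edges := by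
  obtain ⟨t, ht, hlt⟩ := List.mem_iff_getElem.1 hv
  have hL := tp_len hl
  have htne : t ≠ l.length - 1 := by
    intro h
    apply hvS
    rw [← hlt]
    subst h
    exact tp_last hl (by omega)
  refine ⟨l[t+1]'(by omega), ?_⟩
  have := chain_edge (tp_chain hl) (t := t) (by omega)
  rwa [hlt] at this

lemma nonterm_pred {v : V} {l : List V} (hl : IsTermPath Edges S l) (hv : v ∈ l)
    (hvS : v ∉ S) : ∃ w, (w, v) ∈ Edges := by
  obtain ⟨t, ht, hlt⟩ := List.mem_iff_getElem.1 hv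
  have hL := tp_len hl
  have htne : t ≠ 0 := by
    intro h
    apply hvS
    rw [← hlt]
    subst h
    exact tp_head hl (by omega)
  refine ⟨l[t-1]'(by omega), ?_⟩
  have := chain_edge (tp_chain hl) (t := t - 1) (by omega)
  simp only [show t - 1 + 1 = t from by omega] at this
  rwa [hlt] at this

section Ext
variable (hacyclic : ∀ l : List V, 2 ≤ l.length → IsDiChain Edges l →
      l.head? ≠ l.getLast?)
    (hcover : ∀ v : V, v ∉ S → ∃ l, IsTermPath Edges S l ∧ v ∈ l)
include hacyclic hcover

lemma extend_fwd_step {m : List V} (hne : m ≠ []) (hc : IsDiChain Edges m)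
    (hd : ∀ v ∈ m.dropLast, v ∉ S) (hlast : m.getLast hne ∉ S) :
    ∃ w, w ∉ m ∧ IsDiChain Edges (m ++ [w]) ∧ (∀ v ∈ (m ++ [w]).dropLast, v ∉ S) := by
  have hne' : 0 < m.length := List.length_pos_iff.2 hne
  obtain ⟨l0, hl0, hcl0⟩ := hcover (m.getLast hne) hlast
  obtain ⟨w, hw⟩ := nonterm_succ hl0 hcl0 hlast
  have hgl : m.getLast hne = m[m.length - 1]'(by omega) := List.getLast_eq_getElem hne
  refine ⟨w, ?_, ?_, ?_⟩
  · intro hwm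
    obtain ⟨t, ht, hwt⟩ := List.mem_iff_getElem.1 hwm
    have hsl := seg_length (l := m) (t := t) (s := m.length - 1) (by omega) (by omega)
    refine hacyclic (seg m t (m.length - 1) ++ [w])
      (by rw [List.length_append, hsl]; simp) ?_ ?_
    · rw [IsDiChain, List.Chain', List.isChain_append]
      refine ⟨seg_chain hc _ _, List.isChain_singleton w, ?_⟩
      intro x hx y hy
      rw [seg_getLast? (by omega) (by omega)] at hx
      simp only [List.head?_cons, Option.mem_some_iff] at hx hy
      subst hx; subst hy
      rw [← hgl]
      exact hw
    · rw [List.head?_append, seg_head? (by omega) (by omega), List.getLast?_concat, hwt]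
      rfl
  · rw [IsDiChain, List.Chain', List.isChain_append]
    refine ⟨hc, List.isChain_singleton w, ?_⟩
    intro x hx y hy
    rw [List.getLast?_eq_getLast hne] at hx
    simp only [List.head?_cons, Option.mem_some_iff] at hx hy
    subst hx; subst hy
    exact hw
  · rw [List.dropLast_concat]
    intro v hv
    rw [← List.dropLast_append_getLast hne] at hv
    rcases List.mem_append.1 hv with h | h
    · exact hd v h
    · simp only [List.mem_singleton] at h
      subst h
      exact hlast

lemma extend_fwd [Fintype V] (k : ℕ) :
    ∀ m : List V, m ≠ [] → IsDiChain Edges m →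
      (∀ v ∈ m.dropLast, v ∉ S) → Fintype.card V ≤ k + m.length →
      ∃ m', m <+: m' ∧ IsDiChain Edges m' ∧
        (∀ v ∈ m'.dropLast, v ∉ S) ∧ (∀ v, m'.getLast? = some v → v ∈ S) := by
  induction k with
  | zero =>
    intro m hne hc hd hcard
    by_cases hlast : m.getLast hne ∈ S
    · refine ⟨m, List.prefix_refl m, hc, hd, ?_⟩
      intro v hv
      rw [List.getLast?_eq_getLast hne, Option.some_inj] at hv
      rwa [← hv]
    · obtain ⟨w, hwm, hc', hd'⟩ := extend_fwd_step hacyclic hcover hne hc hd hlast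
      have hnd := nodup_of_chain hacyclic hc'
      have hle := hnd.length_le_card
      rw [List.length_append] at hle
      simp only [List.length_singleton] at hle
      omega
  | succ k ih =>
    intro m hne hc hd hcard
    by_cases hlast : m.getLast hne ∈ S
    · refine ⟨m, List.prefix_refl m, hc, hd, ?_⟩
      intro v hv
      rw [List.getLast?_eq_getLast hne, Option.some_inj] at hv
      rwa [← hv]
    · obtain ⟨w, hwm, hc', hd'⟩ := extend_fwd_step hacyclic hcover hne hc hd hlast
      obtain ⟨m', hpre, h1, h2, h3⟩ := ih (m ++ [w]) (by simp) hc' hd'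
        (by rw [List.length_append]; simp; omega)
      exact ⟨m', (List.prefix_append m [w]).trans hpre, h1, h2, h3⟩

lemma extend_bwd_step {m : List V} (hne : m ≠ []) (hlen : 2 ≤ m.length)
    (hc : IsDiChain Edges m)
    (hd : ∀ v ∈ (m.drop 1).dropLast, v ∉ S) (hhead : m.head hne ∉ S) :
    ∃ w, w ∉ m ∧ IsDiChain Edges (w :: m) ∧
      (∀ v ∈ ((w :: m).drop 1).dropLast, v ∉ S) := by
  have hne' : 0 < m.length := List.length_pos_iff.2 hne
  obtain ⟨l0, hl0, hcl0⟩ := hcover (m.head hne) hhead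
  obtain ⟨w, hw⟩ := nonterm_pred hl0 hcl0 hhead
  have hgh : m.head hne = m[0]'hne' := List.head_eq_getElem hne
  refine ⟨w, ?_, ?_, ?_⟩
  · intro hwm
    obtain ⟨t, ht, hwt⟩ := List.mem_iff_getElem.1 hwm
    have hsl := seg_length (l := m) (t := 0) (s := t) (by omega) (by omega)
    refine hacyclic (seg m 0 t ++ [m[0]'hne'])
      (by rw [List.length_append, hsl]; simp) ?_ ?_
    · rw [IsDiChain, List.Chain', List.isChain_append]
      refine ⟨seg_chain hc _ _, List.isChain_singleton _, ?_⟩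
      intro x hx y hy
      rw [seg_getLast? (by omega) (by omega)] at hx
      simp only [List.head?_cons, Option.mem_some_iff] at hx hy
      subst hx; subst hy
      rw [hwt, ← hgh]
      exact hw
    · rw [List.head?_append, seg_head? (by omega) (by omega), List.getLast?_concat]
      rfl
  · rw [IsDiChain, List.Chain', List.isChain_cons]
    refine ⟨?_, hc⟩
    intro y hy
    rw [List.head?_eq_head hne] at hy
    simp only [Option.mem_some_iff] at hy
    subst hy
    exact hw
  · intro v hv
    simp only [List.drop_one, List.tail_cons] at hv
    -- hv : v ∈ m.dropLast
    obtain ⟨t, ht, hvt⟩ := List.mem_iff_getElem.1 hv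
    rw [List.length_dropLast] at ht
    have hvt' : m[t]'(by omega) = v := by rw [← hvt, List.getElem_dropLast]
    rcases Nat.eq_zero_or_pos t with h0 | h0
    · subst h0
      rw [← hvt', ← hgh]
      exact hhead
    · rw [← hvt']
      refine hd _ (interior_getElem h0 (by omega))

lemma extend_bwd [Fintype V] (k : ℕ) :
    ∀ m : List V, 2 ≤ m.length → IsDiChain Edges m →
      (∀ v ∈ (m.drop 1).dropLast, v ∉ S) → (∀ v, m.getLast? = some v → v ∈ S) →
      Fintype.card V ≤ k + m.length →
      ∃ m', m <:+ m' ∧ IsTermPath Edges S m' := by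
  induction k with
  | zero =>
    intro m hlen hc hd hlS hcard
    have hne : m ≠ [] := by intro h; rw [h] at hlen; simp at hlen
    by_cases hhead : m.head hne ∈ S
    · refine ⟨m, List.suffix_refl m, hlen, hc, ?_, hlS, hd⟩
      intro v hv
      rw [List.head?_eq_head hne, Option.some_inj] at hv
      rwa [← hv]
    · obtain ⟨w, hwm, hc', hd'⟩ := extend_bwd_step hacyclic hcover hne hlen hc hd hhead
      have hnd := nodup_of_chain hacyclic hc'
      have hle := hnd.length_le_card
      simp only [List.length_cons] at hle
      omega
  | succ k ih =>
    intro m hlen hc hd hlS hcard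
    have hne : m ≠ [] := by intro h; rw [h] at hlen; simp at hlen
    by_cases hhead : m.head hne ∈ S
    · refine ⟨m, List.suffix_refl m, hlen, hc, ?_, hlS, hd⟩
      intro v hv
      rw [List.head?_eq_head hne, Option.some_inj] at hv
      rwa [← hv]
    · obtain ⟨w, hwm, hc', hd'⟩ := extend_bwd_step hacyclic hcover hne hlen hc hd hhead
      obtain ⟨m', hsuf, hterm⟩ := ih (w :: m) (by simp; omega) hc' hd'
        (by intro v hv; rw [getLast?_cons_ne hne] at hv; exact hlS v hv)
        (by simp; omega)
      exact ⟨m', (List.suffix_cons w m).trans hsuf, hterm⟩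

omit hacyclic hcover in
lemma zip_suffix {m m' : List V} (h : m <:+ m') {t : ℕ} (ht : t + 1 < m.length) :
    (m[t]'(by omega), m[t+1]'ht) ∈ m'.zip m'.tail := by
  obtain ⟨u, hu⟩ := h
  have hlm : m'.length = u.length + m.length := by rw [← hu, List.length_append]
  have h1a : (u ++ m)[u.length + t]'(by rw [List.length_append]; omega)
      = m[t]'(by omega) := by
    rw [List.getElem_append_right (by omega)]
    simp only [Nat.add_sub_cancel_left]
  have h1 : m'[u.length + t]'(by omega) = m[t]'(by omega) :=
    (List.getElem_of_eq hu.symm _).trans h1a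
  have h2a : (u ++ m)[u.length + t + 1]'(by rw [List.length_append]; omega)
      = m[t+1]'ht := by
    rw [List.getElem_append_right (by omega)]
    simp only [show u.length + t + 1 - u.length = t + 1 from by omega]
  have h2 : m'[u.length + t + 1]'(by omega) = m[t+1]'ht :=
    (List.getElem_of_eq hu.symm _).trans h2a
  have hz := mem_zip_of_consec (l := m') (t := u.length + t) (by omega)
  rw [h1, h2] at hz
  exact hz

lemma edge_on_path [Fintype V] {a b : V} (hab : (a, b) ∈ Edges) :
    ∃ l, IsTermPath Edges S l ∧ (a, b) ∈ l.zip l.tail := by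
  obtain ⟨f, hpre, hcf, hdf, hlf⟩ := extend_fwd hacyclic hcover (Fintype.card V) [b]
    (by simp) (by rw [IsDiChain]; exact List.isChain_singleton b) (by simp) (by simp)
  obtain ⟨r, hr⟩ := hpre
  have hfne : f ≠ [] := by rw [← hr]; simp
  have hfb : f.head? = some b := by rw [← hr]; rfl
  have hf0 : f[0]'(List.length_pos_iff.2 hfne) = b := by
    rw [← List.head_eq_getElem hfne]
    rw [List.head?_eq_head hfne, Option.some_inj] at hfb
    exact hfb
  set m1 := a :: f with hm1
  have hc1 : IsDiChain Edges m1 := by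
    rw [hm1, IsDiChain, List.Chain', List.isChain_cons]
    refine ⟨?_, hcf⟩
    intro y hy
    rw [hfb, Option.mem_some_iff] at hy
    subst hy
    exact hab
  have hlen1 : 2 ≤ m1.length := by
    rw [hm1]
    simp only [List.length_cons]
    have := List.length_pos_iff.2 hfne
    omega
  have hd1 : ∀ v ∈ (m1.drop 1).dropLast, v ∉ S := by
    intro v hv
    rw [hm1] at hv
    simp only [List.drop_one, List.tail_cons] at hv
    exact hdf v hv
  have hl1 : ∀ v, m1.getLast? = some v → v ∈ S := by
    intro v hv
    rw [hm1, getLast?_cons_ne hfne] at hv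
    exact hlf v hv
  have hedge1 : (a, b) ∈ m1.zip m1.tail := by
    have := mem_zip_of_consec (l := m1) (t := 0) (by omega)
    have e0 : m1[0]'(by omega) = a := rfl
    have e1 : m1[1]'(by omega) = b := by
      simp only [hm1, List.getElem_cons_succ]
      exact hf0
    rwa [e0, e1] at this
  obtain ⟨m', hsuf, hterm⟩ := extend_bwd hacyclic hcover (Fintype.card V) m1 hlen1 hc1 hd1 hl1
    (by omega)
  refine ⟨m', hterm, ?_⟩
  have := zip_suffix hsuf (m := m1) (t := 0) (by omega)
  have e0 : m1[0]'(by omega) = a := rfl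
  have e1 : m1[1]'(by omega) = b := by
    simp only [hm1, List.getElem_cons_succ]
    exact hf0
  rwa [e0, e1] at this

end Ext


section Count
variable (hacyclic : ∀ l : List V, 2 ≤ l.length → IsDiChain Edges l →
      l.head? ≠ l.getLast?)
    (hunique : ∀ (s t : V) (l₁ l₂ : List V),
      IsTermPath Edges S l₁ → IsTermPath Edges S l₂ →
      l₁.head? = some s → l₁.getLast? = some t →
      l₂.head? = some s → l₂.getLast? = some t → l₁ = l₂)
include hacyclic hunique

lemma key_count {l : List V} (hl : IsTermPath Edges S l)
    {Q : Finset (List V)} (hQ : ∀ p ∈ Q, IsTermPath Edges S p) :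
    (l.toFinset ∩ Q.biUnion (fun p => p.toFinset)).card
      ≤ ((l.zip l.tail).toFinset ∩ Q.biUnion (fun p => (p.zip p.tail).toFinset)).card
        + (Q.filter (fun p => (p.toFinset ∩ l.toFinset).Nonempty)).card := by
  classical
  have hL := tp_len hl
  have hne : l ≠ [] := tp_ne_nil hl
  have hnd := nodup_of_chain hacyclic (tp_chain hl)
  set a0 := l.head hne with ha0
  set f : ℕ → V := fun t => l.getD t a0 with hfdef
  have hf : ∀ (t : ℕ) (h : t < l.length), f t = l[t] := fun t h => List.getD_eq_getElem l a0 h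
  set M := Q.filter (fun p => (p.toFinset ∩ l.toFinset).Nonempty) with hM
  set J : List V → Finset ℕ :=
    fun p => (Finset.range l.length).filter (fun t => f t ∈ p.toFinset) with hJ
  set K : List V → Finset ℕ :=
    fun p => (J p).filter (fun t => ((J p).filter (fun s => t < s)).Nonempty) with hK
  set EIdx := (Finset.range (l.length - 1)).filter (fun t => (f t, f (t+1)) ∈
    (l.zip l.tail).toFinset ∩ Q.biUnion (fun p => (p.zip p.tail).toFinset)) with hE
  have h1 : l.toFinset ∩ Q.biUnion (fun p => p.toFinset) ⊆ (M.biUnion J).image f := by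
    intro v hv
    rw [Finset.mem_inter] at hv
    obtain ⟨hv1, hv2⟩ := hv
    rw [Finset.mem_biUnion] at hv2
    obtain ⟨p, hpQ, hvp⟩ := hv2
    have hv1' := List.mem_toFinset.1 hv1
    obtain ⟨t, ht, hvt⟩ := List.mem_iff_getElem.1 hv1'
    rw [Finset.mem_image]
    refine ⟨t, ?_, by rw [hf t ht, hvt]⟩
    rw [Finset.mem_biUnion]
    refine ⟨p, ?_, ?_⟩
    · rw [hM, Finset.mem_filter]
      exact ⟨hpQ, ⟨v, Finset.mem_inter.2 ⟨hvp, hv1⟩⟩⟩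
    · rw [hJ]
      rw [Finset.mem_filter, Finset.mem_range]
      refine ⟨ht, ?_⟩
      rw [hf t ht, hvt]
      exact hvp
  have h3 : M.biUnion J ⊆ (M.biUnion K) ∪ M.image (fun p => (J p).sup id) := by
    intro t ht
    rw [Finset.mem_biUnion] at ht
    obtain ⟨p, hpM, htJ⟩ := ht
    by_cases hmax : ((J p).filter (fun s => t < s)).Nonempty
    · exact Finset.mem_union_left _ (Finset.mem_biUnion.2 ⟨p, hpM,
        Finset.mem_filter.2 ⟨htJ, hmax⟩⟩)
    · refine Finset.mem_union_right _ (Finset.mem_image.2 ⟨p, hpM, ?_⟩)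
      have hub : ∀ s ∈ J p, s ≤ t := by
        intro s hs
        by_contra hst
        exact hmax ⟨s, Finset.mem_filter.2 ⟨hs, by omega⟩⟩
      exact le_antisymm (Finset.sup_le fun s hs => hub s hs) (Finset.le_sup (f := id) htJ)
  have h4 : M.biUnion K ⊆ EIdx := by
    intro t ht
    rw [Finset.mem_biUnion] at ht
    obtain ⟨p, hpM, htK⟩ := ht
    rw [hK, Finset.mem_filter] at htK
    have htJ := htK.1
    obtain ⟨s, hsF⟩ := htK.2
    rw [Finset.mem_filter] at hsF
    obtain ⟨hsJ, hts⟩ := hsF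
    rw [hJ, Finset.mem_filter, Finset.mem_range] at htJ hsJ
    obtain ⟨htL, htp⟩ := htJ
    obtain ⟨hsL, hsp⟩ := hsJ
    rw [hf t htL, List.mem_toFinset] at htp
    rw [hf s hsL, List.mem_toFinset] at hsp
    have hpM' := Finset.mem_filter.1 hpM
    have hadj := adjacency hacyclic hunique hl (hQ p hpM'.1) hts hsL htp hsp
    rw [hE, Finset.mem_filter, Finset.mem_range]
    refine ⟨by omega, ?_⟩
    rw [Finset.mem_inter]
    constructor
    · rw [hf t htL, hf (t+1) (by omega), List.mem_toFinset]
      exact mem_zip_of_consec (by omega)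
    · rw [Finset.mem_biUnion]
      refine ⟨p, hpM'.1, ?_⟩
      rw [hf t htL, hf (t+1) (by omega), List.mem_toFinset]
      exact hadj
  have h5 : EIdx.card ≤ ((l.zip l.tail).toFinset ∩
      Q.biUnion (fun p => (p.zip p.tail).toFinset)).card := by
    apply Finset.card_le_card_of_injOn (fun t => (f t, f (t+1)))
    · intro t htE
      rw [hE, Finset.mem_coe, Finset.mem_filter] at htE
      exact htE.2
    · intro t1 ht1 t2 ht2 he
      simp only [Finset.coe_filter, Set.mem_setOf_eq, Finset.mem_range, hE,
        Finset.mem_coe, Finset.mem_filter] at ht1 ht2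
      have ht1L : t1 < l.length - 1 := ht1.1
      have ht2L : t2 < l.length - 1 := ht2.1
      have hfst : f t1 = f t2 := congrArg Prod.fst he
      rw [hf t1 (by omega), hf t2 (by omega)] at hfst
      have := List.nodup_iff_injective_get.1 hnd
        (a₁ := ⟨t1, by omega⟩) (a₂ := ⟨t2, by omega⟩) (by simpa using hfst)
      simpa using this
  calc (l.toFinset ∩ Q.biUnion (fun p => p.toFinset)).card
      ≤ ((M.biUnion J).image f).card := Finset.card_le_card h1
    _ ≤ (M.biUnion J).card := Finset.card_image_le
    _ ≤ ((M.biUnion K) ∪ M.image (fun p => (J p).sup id)).card := Finset.card_le_card h3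
    _ ≤ (M.biUnion K).card + (M.image (fun p => (J p).sup id)).card :=
        Finset.card_union_le _ _
    _ ≤ EIdx.card + M.card :=
        Nat.add_le_add (Finset.card_le_card h4) Finset.card_image_le
    _ ≤ _ := Nat.add_le_add_right h5 _

lemma step_count {l : List V} (hl : IsTermPath Edges S l)
    {Q : Finset (List V)} (hQ : ∀ p ∈ Q, IsTermPath Edges S p) :
    ((l.zip l.tail).toFinset \ Q.biUnion (fun p => (p.zip p.tail).toFinset)).card + 1
      ≤ (l.toFinset \ Q.biUnion (fun p => p.toFinset)).card
        + (Q.filter (fun p => (p.toFinset ∩ l.toFinset).Nonempty)).card := by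
  classical
  have hnd := nodup_of_chain hacyclic (tp_chain hl)
  have hL := tp_len hl
  have hcV : l.toFinset.card = l.length := List.toFinset_card_of_nodup hnd
  have hcE : (l.zip l.tail).toFinset.card = l.length - 1 := by
    rw [List.toFinset_card_of_nodup (zip_nodup hnd), List.length_zip, List.length_tail]
    omega
  have a1 := Finset.card_sdiff_add_card_inter (l.zip l.tail).toFinset
    (Q.biUnion (fun p => (p.zip p.tail).toFinset))
  have a2 := Finset.card_sdiff_add_card_inter l.toFinset (Q.biUnion (fun p => p.toFinset))
  have key := key_count hacyclic hunique hl hQ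
  omega

lemma global_count (Q : Finset (List V)) :
    (∀ p ∈ Q, IsTermPath Edges S p) →
    2 * (Q.biUnion fun p => (p.zip p.tail).toFinset).card + 2 * Q.card
      ≤ 2 * (Q.biUnion fun p => p.toFinset).card
        + ∑ l ∈ Q, (Q.filter (fun p => p ≠ l ∧ (p.toFinset ∩ l.toFinset).Nonempty)).card := by
  classical
  induction Q using Finset.induction_on with
  | empty => simp
  | @insert l Q hlQ ih =>
    intro hQ'
    have hQ : ∀ p ∈ Q, IsTermPath Edges S p := fun p hp => hQ' p (Finset.mem_insert_of_mem hp)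
    have hl : IsTermPath Edges S l := hQ' l (Finset.mem_insert_self l Q)
    specialize ih hQ
    have hstep := step_count hacyclic hunique hl hQ
    set r := (Q.filter (fun p => (p.toFinset ∩ l.toFinset).Nonempty)).card with hr
    -- edge/vertex cards
    have hEins : ((insert l Q).biUnion fun p => (p.zip p.tail).toFinset).card
        = ((l.zip l.tail).toFinset \ (Q.biUnion fun p => (p.zip p.tail).toFinset)).card
          + (Q.biUnion fun p => (p.zip p.tail).toFinset).card := by
      rw [Finset.biUnion_insert, ← Finset.card_sdiff_add_card]
    have hVins : ((insert l Q).biUnion fun p => p.toFinset).card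
        = (l.toFinset \ (Q.biUnion fun p => p.toFinset)).card
          + (Q.biUnion fun p => p.toFinset).card := by
      rw [Finset.biUnion_insert, ← Finset.card_sdiff_add_card]
    have hcQ : (insert l Q).card = Q.card + 1 := by
      rw [Finset.card_insert_of_notMem hlQ]
    -- op computation
    have hop : ∑ x ∈ insert l Q, ((insert l Q).filter
          (fun p => p ≠ x ∧ (p.toFinset ∩ x.toFinset).Nonempty)).card
        = (∑ x ∈ Q, (Q.filter (fun p => p ≠ x ∧ (p.toFinset ∩ x.toFinset).Nonempty)).card)
          + 2 * r := by
      rw [Finset.sum_insert hlQ]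
      have hcl : ((insert l Q).filter
          (fun p => p ≠ l ∧ (p.toFinset ∩ l.toFinset).Nonempty)).card = r := by
        rw [Finset.filter_insert, if_neg (by simp), hr]
        congr 1
        apply Finset.filter_congr
        intro p hp
        exact and_iff_right (by rintro rfl; exact hlQ hp)
      have hcx : ∀ x ∈ Q, ((insert l Q).filter
            (fun p => p ≠ x ∧ (p.toFinset ∩ x.toFinset).Nonempty)).card
          = (Q.filter (fun p => p ≠ x ∧ (p.toFinset ∩ x.toFinset).Nonempty)).card
            + (if l ≠ x ∧ (l.toFinset ∩ x.toFinset).Nonempty then 1 else 0) := by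
        intro x hx
        rw [Finset.filter_insert]
        by_cases hc : l ≠ x ∧ (l.toFinset ∩ x.toFinset).Nonempty
        · rw [if_pos hc, if_pos hc, Finset.card_insert_of_notMem
            (fun hmem => hlQ (Finset.mem_of_mem_filter l hmem)), Nat.add_comm]
        · rw [if_neg hc, if_neg hc, Nat.add_zero]
      rw [Finset.sum_congr rfl hcx, Finset.sum_add_distrib, ← Finset.card_filter]
      have hflip : Q.filter (fun x => l ≠ x ∧ (l.toFinset ∩ x.toFinset).Nonempty)
          = Q.filter (fun x => (x.toFinset ∩ l.toFinset).Nonempty) := by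
        apply Finset.filter_congr
        intro x hx
        rw [Finset.inter_comm]
        exact and_iff_right (by rintro rfl; exact hlQ hx)
      rw [hflip, ← hr]
      omega
    rw [hEins, hVins, hcQ, hop]
    omega

end Count


lemma handshake [Fintype V] (hacyclic : ∀ l : List V, 2 ≤ l.length → IsDiChain Edges l →
      l.head? ≠ l.getLast?) :
    ∑ v : V, diDeg Edges v = 2 * Edges.card := by
  unfold diDeg
  classical
  have h1 : ∀ v : V, (Edges.filter fun p => p.1 = v ∨ p.2 = v).card
      = ∑ e ∈ Edges, if e.1 = v ∨ e.2 = v then 1 else 0 := fun v => Finset.card_filter _ _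
  rw [Finset.sum_congr rfl (fun v _ => h1 v), Finset.sum_comm]
  have h2 : ∀ e ∈ Edges, (∑ v : V, if e.1 = v ∨ e.2 = v then 1 else 0) = 2 := by
    intro e he
    rw [← Finset.card_filter]
    have h3 : Finset.univ.filter (fun v => e.1 = v ∨ e.2 = v) = {e.1, e.2} := by
      ext v
      simp [eq_comm]
    rw [h3, Finset.card_insert_of_notMem (by
      simp only [Finset.mem_singleton]
      exact no_self_loop hacyclic he), Finset.card_singleton]
  rw [Finset.sum_congr rfl h2, Finset.sum_const, smul_eq_mul, mul_comm]

end L5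


/-- Degree-excess bound (Lemma 5): for an acyclic digraph whose non-terminal
vertices all lie on terminal paths, with unique paths between terminal pairs,
each path crossed by at most `2N` other paths, and at most `N²` terminal paths
in total, one has `∑ (deg v - 2) ≤ 2N³` and hence `|E| ≤ n + 2N³`
where `n = |V| - 2N`. -/
theorem stmt_3 {V : Type*} [Fintype V] [DecidableEq V] (N : ℕ)
    (Edges : Finset (V × V)) (S : Finset V)
    (hS : S.card ≤ 2 * N)
    (hacyclic : ∀ l : List V, 2 ≤ l.length → IsDiChain Edges l →
      l.head? ≠ l.getLast?)
    (hcover : ∀ v : V, v ∉ S → ∃ l, IsTermPath Edges S l ∧ v ∈ l)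
    (hunique : ∀ (s t : V) (l₁ l₂ : List V),
      IsTermPath Edges S l₁ → IsTermPath Edges S l₂ →
      l₁.head? = some s → l₁.getLast? = some t →
      l₂.head? = some s → l₂.getLast? = some t → l₁ = l₂)
    (hcross : ∀ l, IsTermPath Edges S l → ∃ F : Finset (List V),
      F.card ≤ 2 * N ∧ ∀ l', IsTermPath Edges S l' → l' ≠ l →
        (∃ v, v ∈ l' ∧ v ∈ l) → l' ∈ F)
    (htotal : ∃ F : Finset (List V), F.card ≤ N ^ 2 ∧
      ∀ l, IsTermPath Edges S l → l ∈ F) :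
    (∑ v : V, ((diDeg Edges v : ℤ) - 2) ≤ 2 * N ^ 3) ∧
    ((Edges.card : ℤ) ≤ ((Fintype.card V : ℤ) - 2 * N) + 2 * N ^ 3) := by
  classical
  obtain ⟨F₀, hF₀card, hF₀⟩ := htotal
  set P := F₀.filter (fun l => IsTermPath Edges S l) with hP
  have hPmem : ∀ l, l ∈ P ↔ IsTermPath Edges S l := by
    intro l
    rw [hP, Finset.mem_filter]
    exact ⟨And.right, fun h => ⟨hF₀ l h, h⟩⟩
  have hPcard : P.card ≤ N ^ 2 := le_trans (Finset.card_filter_le _ _) hF₀card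
  have hQ : ∀ p ∈ P, IsTermPath Edges S p := fun p hp => (hPmem p).1 hp
  have hglobal := L5.global_count hacyclic hunique P hQ
  -- crossing bound on the op sum
  have hop : ∑ l ∈ P, (P.filter (fun p => p ≠ l ∧ (p.toFinset ∩ l.toFinset).Nonempty)).card
      ≤ 2 * N * P.card := by
    have hbd : ∀ l ∈ P,
        (P.filter (fun p => p ≠ l ∧ (p.toFinset ∩ l.toFinset).Nonempty)).card ≤ 2 * N := by
      intro l hlP
      obtain ⟨F, hFcard, hF⟩ := hcross l (hQ l hlP)
      refine le_trans (Finset.card_le_card ?_) hFcard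
      intro p hp
      rw [Finset.mem_filter] at hp
      obtain ⟨hpP, hpne, hmeet⟩ := hp
      obtain ⟨v, hv⟩ := hmeet
      rw [Finset.mem_inter, List.mem_toFinset, List.mem_toFinset] at hv
      exact hF p (hQ p hpP) hpne ⟨v, hv.1, hv.2⟩
    calc ∑ l ∈ P, (P.filter (fun p => p ≠ l ∧ (p.toFinset ∩ l.toFinset).Nonempty)).card
        ≤ ∑ _l ∈ P, 2 * N := Finset.sum_le_sum hbd
      _ = 2 * N * P.card := by rw [Finset.sum_const, smul_eq_mul, mul_comm]
  -- edge cover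
  have hcover' : Edges ⊆ P.biUnion (fun p => (p.zip p.tail).toFinset) := by
    intro e he
    obtain ⟨a, b⟩ := e
    obtain ⟨l, hl, hel⟩ := L5.edge_on_path hacyclic hcover he
    exact Finset.mem_biUnion.2 ⟨l, (hPmem l).2 hl, List.mem_toFinset.2 hel⟩
  have hE1 : Edges.card ≤ (P.biUnion fun p => (p.zip p.tail).toFinset).card :=
    Finset.card_le_card hcover'
  have hV1 : (P.biUnion fun p => p.toFinset).card ≤ Fintype.card V :=
    Finset.card_le_univ _
  have hhand : (∑ v : V, diDeg Edges v) = 2 * Edges.card := L5.handshake hacyclic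
  -- main inequality in ℤ
  have hk0 : (0:ℤ) ≤ (P.card : ℤ) := Int.natCast_nonneg _
  have hkN : ((P.card : ℤ)) ≤ (N:ℤ)^2 := by exact_mod_cast hPcard
  have hN0 : (0:ℤ) ≤ (N:ℤ) := Int.natCast_nonneg _
  have hmain : 2 * (Edges.card : ℤ) + 2 * (P.card : ℤ)
      ≤ 2 * (Fintype.card V : ℤ) + 2 * (N:ℤ) * (P.card : ℤ) := by
    have hg := hglobal
    have ho := hop
    have he := hE1
    have hv := hV1
    zify at hg ho he hv
    linarith
  have hsum : ∑ v : V, ((diDeg Edges v : ℤ) - 2)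
      = 2 * (Edges.card : ℤ) - 2 * (Fintype.card V : ℤ) := by
    rw [Finset.sum_sub_distrib, Finset.sum_const, Finset.card_univ]
    have hcast : ∑ v : V, ((diDeg Edges v : ℤ)) = ((∑ v : V, diDeg Edges v : ℕ) : ℤ) := by
      push_cast
      rfl
    rw [hcast, hhand]
    push_cast
    ring
  constructor
  · rw [hsum]
    nlinarith [hmain, mul_le_mul_of_nonneg_left hkN hN0]
  · rcases Nat.eq_zero_or_pos N with h0 | h1
    · subst h0
      have hk : (P.card : ℤ) = 0 := by
        nlinarith
      push_cast
      rw [hk] at hmain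
      push_cast at hmain
      linarith
    · have hN1 : (1:ℤ) ≤ (N:ℤ) := by exact_mod_cast h1
      nlinarith [hmain,
        mul_nonneg (by linarith : (0:ℤ) ≤ (N:ℤ)^2 - (P.card:ℤ))
          (by linarith : (0:ℤ) ≤ (N:ℤ) - 1),
        mul_nonneg (by linarith : (0:ℤ) ≤ (N:ℤ) - 1)
          (by positivity : (0:ℤ) ≤ (N:ℤ)^2 + 2*(N:ℤ))]
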